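/- arXiv:1401.0495 — 5 statements merged into one kernel-verified Lean document; each statement's English description precedes it below -/
import Mathlib

section
/- Let K be a field, F a subfield of K, and X, Y subsets of K such that trdeg(F(X)/F) and trdeg(F(Y)/F) are finite. Then trdeg(F(X ∪ Y)/F) + trdeg(F(X ∩ Y)/F) ≤ trdeg(F(X)/F) + trdeg(F(Y)/F). (Transcendence degree is submodular.) -/
/-!
Algebraic independence over `F` is the independence relation of a finitary matroid on `K`
(`AlgebraicIndependent.matroid`), and `F.trdegOver X` is the cardinal rank of `X` in it.
The cardinal rank function of a finitary matroid is submodular: extend a basis of `X ∩ Y` to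
bases of `X` and of `Y`; their union spans `X ∪ Y`.
-/

noncomputable section

/-- The transcendence degree of `F(X)` over `F`, for `F` a subfield of `K` and `X ⊆ K`:
the supremum of the cardinalities of subsets of `X` that are algebraically independent
over `F`. -/
def Subfield.trdegOver {K : Type*} [Field K] (F : Subfield K) (X : Set K) : Cardinal :=
  ⨆ t : {t : Set K // t ⊆ X ∧ AlgebraicIndependent F ((↑) : t → K)}, Cardinal.mk t.1

theorem Matroid.cRk_eq_iSup_cardinalMk_indep_subset {α : Type*} (M : Matroid α) (X : Set α) :
    M.cRk X = ⨆ I : {I // I ⊆ X ∧ M.Indep I}, Cardinal.mk I := by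
  have hindep : (M.restrict X).Indep = fun I => I ⊆ X ∧ M.Indep I := by
    ext I
    rw [Matroid.restrict_indep_iff, and_comm]
  rw [Matroid.cRk, Matroid.cRank_eq_iSup_cardinalMk_indep, hindep]

theorem Subfield.trdegOver_eq_cRk_matroid {K : Type*} [Field K] (F : Subfield K) (X : Set K) :
    F.trdegOver X = (AlgebraicIndependent.matroid F K).cRk X := by
  rw [Matroid.cRk_eq_iSup_cardinalMk_indep_subset]
  rfl

theorem trdeg_submodular_general {K : Type*} [Field K] (F : Subfield K) (X Y : Set K) :
    F.trdegOver (X ∪ Y) + F.trdegOver (X ∩ Y) ≤ F.trdegOver X + F.trdegOver Y := by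
  simp only [Subfield.trdegOver_eq_cRk_matroid]
  rw [add_comm]
  exact Matroid.cRk_inter_add_cRk_union_le _ X Y

/-- Submodularity of transcendence degree: if `trdeg(F(X)/F)` and `trdeg(F(Y)/F)` are
finite, then `trdeg(F(X ∪ Y)/F) + trdeg(F(X ∩ Y)/F) ≤ trdeg(F(X)/F) + trdeg(F(Y)/F)`. -/
theorem trdeg_submodular {K : Type*} [Field K] (F : Subfield K) (X Y : Set K)
    (hX : F.trdegOver X < Cardinal.aleph0) (hY : F.trdegOver Y < Cardinal.aleph0) :
    F.trdegOver (X ∪ Y) + F.trdegOver (X ∩ Y) ≤ F.trdegOver X + F.trdegOver Y :=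
  trdeg_submodular_general F X Y

end
end

section
/- Let X and Y be finite-rank subgroups of K^×. Then δ(X·Y) + δ(X ∩ Y) ≤ δ(X) + δ(Y), where X·Y denotes the subgroup of K^× generated by X and Y. (The predimension δ is submodular.) -/
noncomputable section

namespace GreenPoints

variable {K : Type*} [Field K] [CharZero K]

/-- The rank of a (multiplicative) subgroup of `Kˣ`: the ℤ-module rank of the
underlying abelian group, i.e. the dimension over ℚ of `S ⊗ ℚ`. -/
def grpRank (S : Subgroup Kˣ) : Cardinal := Module.rank ℤ (Additive S)

/-- A subgroup of `Kˣ` has finite rank. -/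
def FiniteRank (S : Subgroup Kˣ) : Prop := grpRank S < Cardinal.aleph0

/-- The transcendence degree over ℚ of the subfield of `K` generated by a subset `s` of `K`:
the supremum of the cardinalities of subsets of `s` that are algebraically
independent over ℚ. -/
def tdSet (s : Set K) : Cardinal :=
  ⨆ t : {t : Set K // t ⊆ s ∧ AlgebraicIndependent ℚ ((↑) : t → K)}, Cardinal.mk t.1

/-- The transcendence degree over ℚ of the subfield of `K` generated by a subgroup of `Kˣ`. -/
def td (S : Subgroup Kˣ) : Cardinal := tdSet (Units.val '' (S : Set Kˣ))

/-- The predimension `δ(S) = 2·td(S) − rk(S ∩ G)` (with respect to the subgroup `G`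
of green points). -/
def delta (G S : Subgroup Kˣ) : ℤ :=
  2 * ((td S).toNat : ℤ) - ((grpRank (S ⊓ G)).toNat : ℤ)

/-- `Y` is strong in `T` (with respect to `G`): `δ(W) ≥ δ(Y)` for every finite-rank
subgroup `W` with `Y ⊆ W ⊆ T`. -/
def StrongIn (G Y T : Subgroup Kˣ) : Prop :=
  ∀ W : Subgroup Kˣ, FiniteRank W → Y ≤ W → W ≤ T → delta G Y ≤ delta G W

/-- `Y` is strong: strong in `Kˣ`. -/
def Strong (G Y : Subgroup Kˣ) : Prop := StrongIn G Y ⊤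

/-- A subgroup `S` of `Kˣ` is root-closed: `x ∈ S` whenever `x^n ∈ S` for some `n ≥ 1`. -/
def RootClosed (S : Subgroup Kˣ) : Prop :=
  ∀ (x : Kˣ) (n : ℕ), 1 ≤ n → x ^ n ∈ S → x ∈ S

/-- The subfield of `K` generated by a subgroup of `Kˣ`. -/
def fieldOf (S : Subgroup Kˣ) : Subfield K := Subfield.closure (Units.val '' (S : Set Kˣ))

end GreenPoints

/-! The transcendence degree of `S` is the rank, in the algebraic matroid of `K` over `ℚ`, of the
set of elements of `S`. Since `X ⊔ Y` lies in the matroid closure of `X ∪ Y` and `X ⊓ Y` is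
`X ∩ Y`, submodularity of matroid rank gives `td (X ⊔ Y) + td (X ⊓ Y) ≤ td X + td Y`. Group
ranks are ranks of `ℤ`-modules, hence modular, and applied to `X ⊓ G` and `Y ⊓ G` this gives
the opposite inequality for the green parts. Both inequalities survive `Cardinal.toNat` because
finite rank bounds the transcendence degree: algebraically independent units are
multiplicatively independent. -/

open Cardinal

theorem Cardinal.toNat_add_le_toNat_add {a b c d : Cardinal} (h : a + b ≤ c + d)
    (hcd : c + d < ℵ₀) : a.toNat + b.toNat ≤ c.toNat + d.toNat := by
  have hab := h.trans_lt hcd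
  rw [← toNat_add (le_self_add.trans_lt hab) (le_add_self.trans_lt hab),
    ← toNat_add (le_self_add.trans_lt hcd) (le_add_self.trans_lt hcd)]
  exact toNat_le_toNat h hcd

section

variable {M : Type*} [CommGroup M]

def Subgroup.additiveEquivToIntSubmodule (S : Subgroup M) :
    Additive S ≃+ AddSubgroup.toIntSubmodule S.toAddSubgroup where
  toFun a := ⟨Additive.ofMul (a.toMul : M), a.toMul.2⟩
  invFun b := Additive.ofMul ⟨b.1.toMul, b.2⟩
  left_inv _ := rfl
  right_inv _ := rfl
  map_add' _ _ := rfl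

theorem Subgroup.rank_additive_eq (S : Subgroup M) :
    Module.rank ℤ (Additive S) = Module.rank ℤ (AddSubgroup.toIntSubmodule S.toAddSubgroup) :=
  S.additiveEquivToIntSubmodule.toIntLinearEquiv.rank_eq

theorem Subgroup.rank_additive_mono {S T : Subgroup M} (h : S ≤ T) :
    Module.rank ℤ (Additive S) ≤ Module.rank ℤ (Additive T) := by
  rw [S.rank_additive_eq, T.rank_additive_eq]
  exact Submodule.rank_mono h

theorem Subgroup.rank_additive_sup_add_rank_additive_inf (S T : Subgroup M) :
    Module.rank ℤ (Additive ↥(S ⊔ T)) + Module.rank ℤ (Additive ↥(S ⊓ T)) =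
      Module.rank ℤ (Additive S) + Module.rank ℤ (Additive T) := by
  rw [rank_additive_eq, rank_additive_eq, rank_additive_eq, rank_additive_eq,
    OrderIso.map_sup, OrderIso.map_sup, OrderIso.map_inf, OrderIso.map_inf]
  exact Submodule.rank_sup_add_rank_inf_eq _ _

end

theorem AlgebraicIndependent.linearIndependent_ofMul {R A ι : Type*} [CommRing R] [Nontrivial R]
    [CommRing A] [Algebra R A] {u : ι → Aˣ} (h : AlgebraicIndependent R fun i ↦ (u i : A)) :
    LinearIndependent ℤ fun i ↦ Additive.ofMul (u i) := by
  classical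
  rw [linearIndependent_iff']
  intro s g hg i hi
  set a : ι → ℕ := fun j ↦ (g j).toNat
  set b : ι → ℕ := fun j ↦ (-g j).toNat
  have hunits : ∏ j ∈ s, u j ^ a j = ∏ j ∈ s, u j ^ b j := by
    have hprod : ∏ j ∈ s, u j ^ g j = 1 := congrArg Additive.toMul hg
    rw [← div_eq_one, ← Finset.prod_div_distrib, ← hprod]
    refine Finset.prod_congr rfl fun j _ ↦ ?_
    rw [div_eq_mul_inv, ← zpow_natCast, ← zpow_natCast, ← zpow_sub, Int.toNat_sub_toNat_neg]
  have haeval (c : ι → ℕ) : MvPolynomial.aeval (fun j ↦ (u j : A))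
      (MvPolynomial.monomial (∑ j ∈ s, Finsupp.single j (c j)) (1 : R)) =
        ((∏ j ∈ s, u j ^ c j : Aˣ) : A) := by
    simp [MvPolynomial.monomial_sum_one, ← MvPolynomial.X_pow_eq_monomial]
  have hexp : ∑ j ∈ s, Finsupp.single j (a j) = ∑ j ∈ s, Finsupp.single j (b j) :=
    MvPolynomial.monomial_left_injective one_ne_zero (h (by rw [haeval, haeval, hunits]))
  have hi' : a i = b i := by
    simpa [Finsupp.finsetSum_apply, Finsupp.single_apply, hi] using congrArg (· i) hexp
  rw [← Int.toNat_sub_toNat_neg (g i)]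
  exact sub_eq_zero.2 (congrArg Nat.cast hi')

namespace GreenPoints

section

variable {K : Type*} [Field K]

theorem grpRank_mono {S T : Subgroup Kˣ} (h : S ≤ T) : grpRank S ≤ grpRank T :=
  Subgroup.rank_additive_mono h

theorem FiniteRank.mono {S T : Subgroup Kˣ} (hT : FiniteRank T) (h : S ≤ T) : FiniteRank S :=
  (grpRank_mono h).trans_lt hT

theorem FiniteRank.sup {S T : Subgroup Kˣ} (hS : FiniteRank S) (hT : FiniteRank T) :
    FiniteRank (S ⊔ T) :=
  (le_self_add.trans (Subgroup.rank_additive_sup_add_rank_additive_inf S T).le).trans_lt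
    (add_lt_aleph0 hS hT)

theorem grpRank_inf_add_grpRank_inf_le (G X Y : Subgroup Kˣ) :
    grpRank (X ⊓ G) + grpRank (Y ⊓ G) ≤
      grpRank ((X ⊔ Y) ⊓ G) + grpRank (X ⊓ Y ⊓ G) := by
  rw [grpRank, grpRank, ← Subgroup.rank_additive_sup_add_rank_additive_inf]
  refine add_le_add (grpRank_mono (sup_le (inf_le_inf_right G le_sup_left)
    (inf_le_inf_right G le_sup_right))) (le_of_eq ?_)
  rw [← inf_inf_distrib_right]
  rfl

end

section

variable {K : Type*} [Field K] [CharZero K]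

theorem tdSet_eq_cRk (s : Set K) : tdSet s = (AlgebraicIndependent.matroid ℚ K).cRk s := by
  refine le_antisymm (ciSup_le' fun t ↦ Matroid.Indep.cardinalMk_le_cRk_of_subset t.2.2 t.2.1) ?_
  refine Matroid.cRk_le_iff.2 fun I hI ↦ ?_
  exact le_ciSup (f := fun t : {t : Set K // t ⊆ s ∧ AlgebraicIndependent ℚ ((↑) : t → K)} ↦
    #t.1) bddAbove_of_small ⟨I, hI.subset, hI.indep⟩

theorem td_le_grpRank (S : Subgroup Kˣ) : td S ≤ grpRank S := by
  refine ciSup_le' fun ⟨t, hts, ht⟩ ↦ ?_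
  have hpre (x : t) : ∃ y : S, ((y : Kˣ) : K) = x := by
    obtain ⟨y, hy, hyx⟩ := hts x.2
    exact ⟨⟨y, hy⟩, hyx⟩
  choose u hu using hpre
  have hli : LinearIndependent ℤ fun x ↦ Additive.ofMul (u x : Kˣ) :=
    AlgebraicIndependent.linearIndependent_ofMul (R := ℚ) (by simpa only [hu] using ht)
  exact (LinearIndependent.of_comp (v := fun x ↦ Additive.ofMul (u x))
    S.subtype.toAdditive.toIntLinearMap hli).cardinal_le_rank

theorem td_sup_add_td_inf_le (X Y : Subgroup Kˣ) :
    td (X ⊔ Y) + td (X ⊓ Y) ≤ td X + td Y := by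
  set M := AlgebraicIndependent.matroid ℚ K
  set x := Units.val '' (X : Set Kˣ)
  set y := Units.val '' (Y : Set Kˣ)
  have hinf : Units.val '' ((X ⊓ Y : Subgroup Kˣ) : Set Kˣ) = x ∩ y :=
    Set.image_inter Units.val_injective
  have hsup : Units.val '' ((X ⊔ Y : Subgroup Kˣ) : Set Kˣ) ⊆ M.closure (x ∪ y) := by
    rintro _ ⟨_, hz, rfl⟩
    obtain ⟨a, ha, b, hb, rfl⟩ := Subgroup.mem_sup.1 hz
    have hxy : x ∪ y ⊆ M.closure (x ∪ y) := M.subset_closure _ (Set.subset_univ _)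
    rw [AlgebraicIndependent.matroid_closure_eq] at hxy ⊢
    exact mul_mem (hxy (.inl ⟨a, ha, rfl⟩)) (hxy (.inr ⟨b, hb, rfl⟩))
  calc td (X ⊔ Y) + td (X ⊓ Y) ≤ M.cRk (x ∪ y) + M.cRk (x ∩ y) := by
        rw [td, td, tdSet_eq_cRk, tdSet_eq_cRk, hinf, ← M.cRk_closure (x ∪ y)]
        exact add_le_add (M.cRk_le_of_subset hsup) le_rfl
    _ ≤ td X + td Y := by
        rw [td, td, tdSet_eq_cRk, tdSet_eq_cRk, add_comm]
        exact M.cRk_inter_add_cRk_union_le x y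

/-- Submodularity of the predimension `δ`: for finite-rank subgroups `X, Y` of `Kˣ`,
`δ(X·Y) + δ(X ∩ Y) ≤ δ(X) + δ(Y)`, where `X·Y = X ⊔ Y` is the subgroup generated by
`X` and `Y`. -/
theorem delta_submodular {K : Type*} [Field K] [CharZero K] (G X Y : Subgroup Kˣ)
    (hX : FiniteRank X) (hY : FiniteRank Y) :
    delta G (X ⊔ Y) + delta G (X ⊓ Y) ≤ delta G X + delta G Y := by
  have htd := Cardinal.toNat_add_le_toNat_add (td_sup_add_td_inf_le X Y)
    (add_lt_aleph0 ((td_le_grpRank X).trans_lt hX) ((td_le_grpRank Y).trans_lt hY))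
  have hrk := Cardinal.toNat_add_le_toNat_add (grpRank_inf_add_grpRank_inf_le G X Y)
    (add_lt_aleph0 ((hX.sup hY).mono inf_le_left) ((hX.mono inf_le_left).mono inf_le_left))
  unfold delta
  omega

end

end GreenPoints

end
end

section
/- Let K be a field, F a subfield of K, c ∈ F with c ≠ 0, and let b ∈ K be transcendental over F (so b ≠ 0 and c − b ≠ 0). Then for every pair of integers (m₁, m₂) ≠ (0, 0), the element b^{m₁}·(c − b)^{m₂} of K^× is transcendental over F. (The subvariety of (K^×)² defined by x + y = c is free of multiplicative dependences; together with its dimension being 1, this makes it rotund.) -/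
/-!
Sending `X ↦ b` identifies `F(X)` with `F(b)` because `b` is transcendental, and carries
`X ^ m₁ * (c - X) ^ m₂` to `b ^ m₁ * (c - b) ^ m₂`. After clearing denominators, comparing root
multiplicities at `0` and at `c` shows that this rational function is not constant, and a
nonconstant rational function is transcendental over the base field.
-/

noncomputable section

/-- The transcendence degree over a subfield `F` of `K` of the subfield `F(s)` generated by
`F` and a subset `s` of `K`: the supremum of the cardinalities of subsets of `s` that are
algebraically independent over `F`. -/
def trdegOver {K : Type*} [Field K] (F : Subfield K) (s : Set K) : Cardinal :=
  ⨆ t : {t : Set K // t ⊆ s ∧ AlgebraicIndependent F ((↑) : t → K)}, Cardinal.mk t.1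

/-- The subfield `F(s)` of `K` generated by a subfield `F` and a subset `s` of `K`. -/
def Subfield.adjoinSet {K : Type*} [Field K] (F : Subfield K) (s : Set K) : Subfield K :=
  Subfield.closure ((F : Set K) ∪ s)

open Polynomial

namespace Polynomial

variable {R : Type*} [CommRing R] [IsDomain R]

theorem rootMultiplicity_C_mul_X_sub_C_pow_mul_X_sub_C_pow {a c d : R} (hac : a ≠ c)
    (hd : d ≠ 0) (m n : ℕ) :
    rootMultiplicity a (C d * (X - C c) ^ m * (X - C a) ^ n) = n := by
  have hroot : ¬ (C d * (X - C c) ^ m).IsRoot a := by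
    simp [hd, sub_ne_zero.mpr hac]
  rw [rootMultiplicity_mul_X_sub_C_pow fun h ↦ hroot (by simp [h]),
    rootMultiplicity_eq_zero hroot, zero_add]

theorem eq_and_eq_of_X_sub_C_pow_mul_X_sub_C_pow_eq {a c d : R} (hac : a ≠ c)
    {n₁ n₂ k₁ k₂ : ℕ}
    (h : (X - C a) ^ n₁ * (X - C c) ^ n₂ = C d * ((X - C a) ^ k₁ * (X - C c) ^ k₂)) :
    n₁ = k₁ ∧ n₂ = k₂ := by
  have hd : d ≠ 0 := by
    rintro rfl
    simp [X_sub_C_ne_zero] at h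
  constructor
  · have := rootMultiplicity_C_mul_X_sub_C_pow_mul_X_sub_C_pow hac one_ne_zero n₂ n₁
    rw [C_1, one_mul, mul_comm, h, mul_comm ((X - C a) ^ k₁), ← mul_assoc,
      rootMultiplicity_C_mul_X_sub_C_pow_mul_X_sub_C_pow hac hd] at this
    exact this.symm
  · have := rootMultiplicity_C_mul_X_sub_C_pow_mul_X_sub_C_pow hac.symm one_ne_zero n₁ n₂
    rw [C_1, one_mul, h, ← mul_assoc,
      rootMultiplicity_C_mul_X_sub_C_pow_mul_X_sub_C_pow hac.symm hd] at this
    exact this.symm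

end Polynomial

namespace RatFunc

variable {K : Type*} [Field K]

theorem X_sub_C_zpow_mul_X_sub_C_zpow_ne_C {a c : K} (hac : a ≠ c) {m₁ m₂ : ℤ}
    (hm : (m₁, m₂) ≠ (0, 0)) (d : K) : (X - C a) ^ m₁ * (X - C c) ^ m₂ ≠ C d := by
  intro h
  obtain ⟨n₁, k₁, rfl⟩ : ∃ n k : ℕ, m₁ = n - k := ⟨_, _, m₁.toNat_sub_toNat_neg.symm⟩
  obtain ⟨n₂, k₂, rfl⟩ : ∃ n k : ℕ, m₂ = n - k := ⟨_, _, m₂.toNat_sub_toNat_neg.symm⟩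
  have hne (e : K) : (X - C e : RatFunc K) ≠ 0 := by
    rw [← algebraMap_X, ← algebraMap_C, ← map_sub]
    exact algebraMap_ne_zero (X_sub_C_ne_zero e)
  rw [zpow_sub₀ (hne a), zpow_sub₀ (hne c), div_mul_div_comm,
    div_eq_iff (mul_ne_zero (zpow_ne_zero _ (hne a)) (zpow_ne_zero _ (hne c)))] at h
  have hpoly : (Polynomial.X - Polynomial.C a) ^ n₁ * (Polynomial.X - Polynomial.C c) ^ n₂ =
      Polynomial.C d *
        ((Polynomial.X - Polynomial.C a) ^ k₁ * (Polynomial.X - Polynomial.C c) ^ k₂) :=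
    algebraMap_injective K (by simpa [algebraMap_X, algebraMap_C] using h)
  obtain ⟨rfl, rfl⟩ := eq_and_eq_of_X_sub_C_pow_mul_X_sub_C_pow_eq hac hpoly
  exact hm (by simp)

theorem X_zpow_mul_C_sub_X_zpow_ne_C {c : K} (hc : c ≠ 0) {m₁ m₂ : ℤ}
    (hm : (m₁, m₂) ≠ (0, 0)) (d : K) : X ^ m₁ * (C c - X) ^ m₂ ≠ C d := by
  intro h
  refine X_sub_C_zpow_mul_X_sub_C_zpow_ne_C hc.symm hm ((-1) ^ m₂ * d) ?_
  rw [map_mul, map_zpow₀, map_neg, map_one, ← h, map_zero, sub_zero, ← neg_sub,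
    neg_eq_neg_one_mul, mul_zpow]
  ring

theorem transcendental_algHom_apply_of_ne_C {L : Type*} [Field L] [Algebra K L]
    (φ : RatFunc K →ₐ[K] L) {f : RatFunc K} (hf : ¬∃ d, f = C d) : Transcendental K (φ f) :=
  (isAlgebraic_algHom_iff φ φ.toRingHom.injective).not.mpr (transcendental_of_ne_C f hf)

end RatFunc

/-- The subvariety of `(K^×)²` defined by `x + y = c` is free of multiplicative dependences:
if `c ∈ F` is nonzero and `b` is transcendental over `F`, then for every pair of integers
`(m₁, m₂) ≠ (0, 0)`, the element `b^{m₁}·(c − b)^{m₂}` is transcendental over `F`. -/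
theorem transcendental_pow_mul_pow {K : Type*} [Field K] (F : Subfield K)
    (c : K) (hcF : c ∈ F) (hc : c ≠ 0) (b : K) (hb : Transcendental F b) :
    ∀ m₁ m₂ : ℤ, (m₁, m₂) ≠ (0, 0) →
      Transcendental F (b ^ m₁ * (c - b) ^ m₂) := by
  intro m₁ m₂ hm
  let φ : RatFunc F →ₐ[F] K :=
    (IntermediateField.val _).comp (RatFunc.algEquivOfTranscendental b hb).toAlgHom
  have hφX : φ RatFunc.X = b := by simp [φ]
  have hc' : (⟨c, hcF⟩ : F) ≠ 0 := by simpa [← Subtype.coe_ne_coe] using hc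
  have := RatFunc.transcendental_algHom_apply_of_ne_C φ
    (fun ⟨d, hd⟩ ↦ RatFunc.X_zpow_mul_C_sub_X_zpow_ne_C hc' hm d hd)
  simpa [map_zpow₀, hφX, ← RatFunc.algebraMap_eq_C, Subfield.algebraMap_ofSubfield] using this

end
end

section
/- Let K be an algebraically closed field of characteristic zero, F a subfield of K, n ≥ 1, and let b, b′ ∈ (K^×)^n, positive integers m₁, …, m_n, and elements d₁, …, d_n ∈ K^× each algebraic over F be such that (b′_i)^{m_i}·d_i = b_i for each i = 1, …, n. If for every k×n integer matrix M of rank k (1 ≤ k ≤ n) one has 2·trdeg(b^M/F) ≥ k, then for every k×n integer matrix M of rank k (1 ≤ k ≤ n) one has 2·trdeg((b′)^M/F) ≥ k. (Rotundity is preserved under coordinatewise extraction of roots and translation by algebraic elements.) -/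
/-!
Put `L = ∏ mᵢ` and `cᵢ = L / mᵢ`. Since the `cᵢ` are nonzero, `M' = M · diag(c)` has the same
rank `k` as `M`, and coordinatewise `b^{M'} = (b′^M)^L · e` with `e = ∏ᵢ dᵢ^{M_{j,i} cᵢ}` algebraic
over `F`. So `b^{M'}` is algebraic over `F(b′^M)`, and in the algebraic matroid of `K` over `F`
(whose rank function is `trdegOver F`) this gives `trdeg(b^{M'}/F) ≤ trdeg(b′^M/F)`.
-/

noncomputable section

section TrdegOver

open AlgebraicIndependent

variable {K : Type*} [Field K] (F : Subfield K)

theorem trdegOver_eq_cRk (s : Set K) : trdegOver F s = (matroid F K).cRk s := by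
  rw [Matroid.cRk, Matroid.cRank_eq_iSup_cardinalMk_indep, trdegOver]
  exact (Equiv.subtypeEquivRight fun _ => and_comm).iSup_comp
    (g := fun I : {I // ((matroid F K).restrict s).Indep I} => Cardinal.mk I.1)

theorem trdegOver_le_of_subset_algebraicClosure {s t : Set K}
    (h : s ⊆ Subalgebra.algebraicClosure (Algebra.adjoin F t) K) :
    trdegOver F s ≤ trdegOver F t := by
  rw [trdegOver_eq_cRk, trdegOver_eq_cRk, ← Matroid.cRk_closure _ t]
  exact Matroid.cRk_le_of_subset _ (by rwa [matroid_closure_eq (R := F)])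

end TrdegOver

theorem Matrix.rank_mul_diagonal_of_ne_zero {R m n : Type*} [CommRing R] [IsDomain R]
    [Fintype n] [DecidableEq n] (M : Matrix m n R) {c : n → R} (hc : ∀ i, c i ≠ 0) :
    (M * Matrix.diagonal c).rank = M.rank :=
  Matrix.rank_mul_eq_left_of_det_ne_zero _ M <| by
    rw [Matrix.det_diagonal]
    exact Finset.prod_ne_zero_iff.mpr fun i _ => hc i

theorem Finset.prod_zpow_mul_eq_pow_mul_prod {G ι : Type*} [CommGroup G] (s : Finset ι)
    {b b' d : ι → G} {m : ι → ℕ} {c : ι → ℤ} {L : ℕ} (hb : ∀ i, b' i ^ m i * d i = b i)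
    (hc : ∀ i, (m i : ℤ) * c i = L) (z : ι → ℤ) :
    ∏ i ∈ s, b i ^ (z i * c i) = (∏ i ∈ s, b' i ^ z i) ^ L * ∏ i ∈ s, d i ^ (z i * c i) := by
  have hfactor : ∀ i, b i ^ (z i * c i) = (b' i ^ z i) ^ L * d i ^ (z i * c i) := fun i => by
    rw [← hb i, mul_zpow, ← zpow_natCast, ← zpow_natCast, ← zpow_mul, ← zpow_mul, ← hc i]
    ring_nf
  rw [Finset.prod_congr rfl fun i _ => hfactor i, Finset.prod_mul_distrib, Finset.prod_pow]

theorem isAlgebraic_val_prod_zpow {F K ι : Type*} [Field F] [Field K] [Algebra F K]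
    (s : Finset ι) {d : ι → Kˣ} (hd : ∀ i, IsAlgebraic F (d i : K)) (z : ι → ℤ) :
    IsAlgebraic F ((∏ i ∈ s, d i ^ z i : Kˣ) : K) := by
  rw [← mem_algebraicClosure_iff, Units.coe_prod]
  exact prod_mem fun i _ => by
    rw [Units.val_zpow_eq_zpow_val]
    exact zpow_mem (mem_algebraicClosure_iff.mpr (hd i)) _

theorem rotund_of_roots_and_algebraic_translates_general {K : Type*} [Field K]
    (F : Subfield K) (n : ℕ)
    (b b' : Fin n → Kˣ) (m : Fin n → ℕ) (hm : ∀ i, 1 ≤ m i) (d : Fin n → Kˣ)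
    (hd : ∀ i, IsAlgebraic F ((d i : Kˣ) : K))
    (heq : ∀ i, b' i ^ m i * d i = b i)
    (hrot : ∀ k : ℕ, 1 ≤ k → k ≤ n → ∀ M : Matrix (Fin k) (Fin n) ℤ, M.rank = k →
      (k : Cardinal) ≤
        2 * trdegOver F (Set.range fun j => ((∏ i, b i ^ M j i : Kˣ) : K))) :
    ∀ k : ℕ, 1 ≤ k → k ≤ n → ∀ M : Matrix (Fin k) (Fin n) ℤ, M.rank = k →
      (k : Cardinal) ≤
        2 * trdegOver F (Set.range fun j => ((∏ i, b' i ^ M j i : Kˣ) : K)) := by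
  intro k hk hkn M hM
  let c : Fin n → ℤ := fun i => ∏ j ∈ Finset.univ.erase i, (m j : ℤ)
  have hc : ∀ i, (m i : ℤ) * c i = ↑(∏ j, m j) := fun i => by
    push_cast
    exact Finset.mul_prod_erase _ (fun j => (m j : ℤ)) (Finset.mem_univ i)
  have hc0 : ∀ i, c i ≠ 0 := fun i => Finset.prod_ne_zero_iff.mpr fun j _ => by
    have := hm j
    positivity
  have hrank : (M * Matrix.diagonal c).rank = k := by
    rw [M.rank_mul_diagonal_of_ne_zero hc0, hM]
  refine (hrot k hk hkn _ hrank).trans ?_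
  gcongr
  apply trdegOver_le_of_subset_algebraicClosure
  rintro _ ⟨j, rfl⟩
  simp only [Matrix.mul_diagonal]
  rw [Finset.prod_zpow_mul_eq_pow_mul_prod _ heq hc, Units.val_mul, Units.val_pow_eq_pow_val]
  refine mul_mem (pow_mem ?_ _) ?_
  · exact isAlgebraic_algebraMap (⟨_, Algebra.subset_adjoin (Set.mem_range_self j)⟩ :
      Algebra.adjoin F _)
  · exact (isAlgebraic_val_prod_zpow _ hd _).extendScalars (RingHom.injective _)

/-- Rotundity is preserved under coordinatewise extraction of roots and translation by
algebraic elements: if `(b′ᵢ)^{mᵢ}·dᵢ = bᵢ` with `mᵢ ≥ 1` and each `dᵢ` algebraic over `F`,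
and for every `k×n` integer matrix `M` of rank `k` one has `2·trdeg(b^M/F) ≥ k`, then the
same holds with `b` replaced by `b′`. -/
theorem rotund_of_roots_and_algebraic_translates {K : Type*} [Field K] [IsAlgClosed K]
    [CharZero K] (F : Subfield K) (n : ℕ) (hn : 1 ≤ n)
    (b b' : Fin n → Kˣ) (m : Fin n → ℕ) (hm : ∀ i, 1 ≤ m i) (d : Fin n → Kˣ)
    (hd : ∀ i, IsAlgebraic F ((d i : Kˣ) : K))
    (heq : ∀ i, b' i ^ m i * d i = b i)
    (hrot : ∀ k : ℕ, 1 ≤ k → k ≤ n → ∀ M : Matrix (Fin k) (Fin n) ℤ, M.rank = k →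
      (k : Cardinal) ≤
        2 * trdegOver F (Set.range fun j => ((∏ i, b i ^ M j i : Kˣ) : K))) :
    ∀ k : ℕ, 1 ≤ k → k ≤ n → ∀ M : Matrix (Fin k) (Fin n) ℤ, M.rank = k →
      (k : Cardinal) ≤
        2 * trdegOver F (Set.range fun j => ((∏ i, b' i ^ M j i : Kˣ) : K)) :=
  rotund_of_roots_and_algebraic_translates_general F n b b' m hm d hd heq hrot

end
end

section
/- Let D be a torsion-free abelian group, D₀ a divisible subgroup of D, and H a subgroup of D. Let e ∈ H ∩ D₀ and suppose that for every integer m ≥ 2 the quotient H/mH is cyclic of order m generated by the class of e. Then for every integer m ≥ 2 the quotient (H ∩ D₀)/m(H ∩ D₀) is cyclic of order m generated by the class of e. (The intersection of a ℤ-group with a divisible subgroup of a torsion-free ambient group containing its distinguished generator is again a ℤ-group.) -/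
/-!
Write `K = H ∩ D₀`. Since `D` is torsion-free and `D₀` divisible, `D₀` is pure in `D`:
if `m > 0` and `m • x ∈ D₀` then `x ∈ D₀`. Hence `mK = K ∩ mH`, i.e. the map `K/mK → H/mH` induced by the
inclusion is injective. Its image contains the class of `e`, which generates `H/mH`, so it is
an isomorphism carrying the class of `e` to the class of `e`.
-/

noncomputable section

def smulSubgroup (m : ℕ) (A : Type*) [AddCommGroup A] : AddSubgroup A :=
  AddMonoidHom.range (AddMonoidHom.mk' (fun a : A => m • a) (fun a b => smul_add m a b))

open Function

section SmulSubgroupMap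

variable (m : ℕ) {A B : Type*} [AddCommGroup A] [AddCommGroup B]

theorem smulSubgroup_le_comap (f : A →+ B) :
    smulSubgroup m A ≤ (smulSubgroup m B).comap f := by
  rintro _ ⟨a, rfl⟩
  exact ⟨f a, (map_nsmul f m a).symm⟩

def smulSubgroupMap (f : A →+ B) : A ⧸ smulSubgroup m A →+ B ⧸ smulSubgroup m B :=
  QuotientAddGroup.map _ _ f (smulSubgroup_le_comap m f)

@[simp]
theorem smulSubgroupMap_mk (f : A →+ B) (a : A) :
    smulSubgroupMap m f (a : A ⧸ smulSubgroup m A) = (f a : B ⧸ smulSubgroup m B) :=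
  rfl

theorem smulSubgroupMap_injective {f : A →+ B}
    (hf : ∀ a, f a ∈ smulSubgroup m B → a ∈ smulSubgroup m A) :
    Injective (smulSubgroupMap m f) := by
  refine (injective_iff_map_eq_zero _).mpr fun q hq => ?_
  induction q using QuotientAddGroup.induction_on with
  | H a =>
    rw [smulSubgroupMap_mk, QuotientAddGroup.eq_zero_iff] at hq
    exact (QuotientAddGroup.eq_zero_iff a).mpr (hf a hq)

end SmulSubgroupMap

section Generators

variable {G G' : Type*} [AddGroup G] [AddGroup G'] {φ : G →+ G'} {g : G}

theorem AddMonoidHom.surjective_of_forall_exists_zsmul_eq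
    (hg : ∀ q' : G', ∃ k : ℤ, k • φ g = q') : Surjective φ := fun q' =>
  let ⟨k, hk⟩ := hg q'
  ⟨k • g, by rw [map_zsmul, hk]⟩

theorem AddMonoidHom.forall_exists_zsmul_eq_of_injective (hφ : Injective φ)
    (hg : ∀ q' : G', ∃ k : ℤ, k • φ g = q') (q : G) : ∃ k : ℤ, k • g = q :=
  let ⟨k, hk⟩ := hg (φ q)
  ⟨k, hφ (by rw [map_zsmul, hk])⟩

end Generators

section Divisible

variable {D : Type*} [AddCommGroup D] {D₀ : AddSubgroup D}

theorem mem_of_nsmul_mem_of_divisible (hDtf : ∀ (x : D) (n : ℕ), 0 < n → n • x = 0 → x = 0)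
    (hdiv : ∀ d ∈ D₀, ∀ m : ℕ, 1 ≤ m → ∃ d' ∈ D₀, m • d' = d)
    {m : ℕ} (hm : 0 < m) {x : D} (hx : m • x ∈ D₀) : x ∈ D₀ := by
  obtain ⟨d, hd, hdx⟩ := hdiv _ hx m hm
  have : d = x := sub_eq_zero.mp (hDtf _ m hm (by rw [smul_sub, hdx, sub_self]))
  exact this ▸ hd

theorem mem_smulSubgroup_inf_of_divisible
    (hDtf : ∀ (x : D) (n : ℕ), 0 < n → n • x = 0 → x = 0)
    (hdiv : ∀ d ∈ D₀, ∀ m : ℕ, 1 ≤ m → ∃ d' ∈ D₀, m • d' = d)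
    {H : AddSubgroup D} {m : ℕ} (hm : 0 < m) (a : (H ⊓ D₀ : AddSubgroup D))
    (ha : AddSubgroup.inclusion inf_le_left a ∈ smulSubgroup m H) :
    a ∈ smulSubgroup m (H ⊓ D₀ : AddSubgroup D) := by
  obtain ⟨h, hh⟩ := ha
  have hhD : (m • h : D) = a := congrArg Subtype.val hh
  have hD₀ : (h : D) ∈ D₀ :=
    mem_of_nsmul_mem_of_divisible hDtf hdiv hm (hhD ▸ a.2.2)
  exact ⟨⟨h, h.2, hD₀⟩, Subtype.ext hhD⟩

end Divisible

/-- The intersection of a ℤ-group with a divisible subgroup of a torsion-free ambient group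
containing its distinguished generator is again a ℤ-group: if `D` is torsion-free abelian,
`D₀ ≤ D` is divisible, `H ≤ D`, `e ∈ H ∩ D₀`, and for every `m ≥ 2` the quotient `H/mH` is
cyclic of order `m` generated by the class of `e`, then for every `m ≥ 2` the quotient
`(H ∩ D₀)/m(H ∩ D₀)` is cyclic of order `m` generated by the class of `e`. -/
theorem zgroup_inter_divisible (D : Type*) [AddCommGroup D]
    (hDtf : ∀ (x : D) (n : ℕ), 0 < n → n • x = 0 → x = 0)
    (D₀ H : AddSubgroup D)
    (hdiv : ∀ d ∈ D₀, ∀ m : ℕ, 1 ≤ m → ∃ d' ∈ D₀, m • d' = d)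
    (e : D) (he : e ∈ H ⊓ D₀)
    (hH : ∀ m : ℕ, 2 ≤ m →
      Nat.card (H ⧸ smulSubgroup m H) = m ∧
      ∀ q : H ⧸ smulSubgroup m H, ∃ k : ℤ,
        k • (QuotientAddGroup.mk (⟨e, (AddSubgroup.mem_inf.mp he).1⟩ : H)) = q) :
    ∀ m : ℕ, 2 ≤ m →
      Nat.card ((H ⊓ D₀ : AddSubgroup D) ⧸ smulSubgroup m (H ⊓ D₀ : AddSubgroup D)) = m ∧
      ∀ q : (H ⊓ D₀ : AddSubgroup D) ⧸ smulSubgroup m (H ⊓ D₀ : AddSubgroup D), ∃ k : ℤ,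
        k • (QuotientAddGroup.mk (⟨e, he⟩ : (H ⊓ D₀ : AddSubgroup D))) = q := by
  intro m hm
  obtain ⟨hcard, hgen⟩ := hH m hm
  set φ := smulSubgroupMap m (AddSubgroup.inclusion (inf_le_left : H ⊓ D₀ ≤ H))
  have hφ : Injective φ :=
    smulSubgroupMap_injective m (mem_smulSubgroup_inf_of_divisible hDtf hdiv (by omega))
  have hgen' : ∀ q, ∃ k : ℤ, k • φ (QuotientAddGroup.mk ⟨e, he⟩) = q := hgen
  have hbij : Bijective φ := ⟨hφ, φ.surjective_of_forall_exists_zsmul_eq hgen'⟩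
  exact ⟨(Nat.card_eq_of_bijective φ hbij).trans hcard,
    φ.forall_exists_zsmul_eq_of_injective hφ hgen'⟩

end
end
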